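/- Fix q with 0 < q < 1 and let λ₀, s₀ be real-valued functions on ℝ∖{0}. Suppose y is a real polynomial function of degree exactly n, with n ≥ 1, satisfying (D_q²y)(x) = λ₀(x)(D_qy)(x) + s₀(x)y(x) for all x ≠ 0. Then (s_n(x)λ_{n−1}(x) − s_{n−1}(x)λ_n(x))·(D_qy)(x) = 0 for all x ≠ 0. -/

import Mathlib

/-!
The q-AIM recursion is the q-Leibniz rule `D_q(fg)(x) = D_q f(x) g(x) + f(qx) D_q g(x)` applied to
`λ_k D_q y + s_k y`, with `D_q² y` replaced by `λ₀ D_q y + s₀ y`; hence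
`D_q^{k+2} y = λ_k D_q y + s_k y` for every `k`. For `y` a polynomial of degree `n`, both
`D_q^{n+1} y` and `D_q^{n+2} y` vanish, and eliminating `y` from the two resulting relations
leaves `(s_n λ_{n-1} - s_{n-1} λ_n) D_q y = 0`.
-/

/-- The `q`-difference operator: `(D_q f)(x) = (f(x) - f(qx)) / ((1-q)x)`. -/
noncomputable def Dq (q : ℝ) (f : ℝ → ℝ) : ℝ → ℝ :=
  fun x => (f x - f (q * x)) / ((1 - q) * x)

/-- The q-AIM sequences `(λ_n, s_n)` built from `(λ₀, s₀)`. -/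
noncomputable def qdaim (q : ℝ) (l0 s0 : ℝ → ℝ) : ℕ → (ℝ → ℝ) × (ℝ → ℝ)
  | 0 => (l0, s0)
  | n + 1 =>
      (fun x => Dq q (qdaim q l0 s0 n).1 x + (qdaim q l0 s0 n).1 (q * x) * l0 x
          + (qdaim q l0 s0 n).2 (q * x),
       fun x => Dq q (qdaim q l0 s0 n).2 x + (qdaim q l0 s0 n).1 (q * x) * s0 x)

open Polynomial

section QDifference

variable {q : ℝ}

lemma Dq_congr (hq0 : q ≠ 0) {f g : ℝ → ℝ} (hfg : ∀ t, t ≠ 0 → f t = g t) {x : ℝ}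
    (hx : x ≠ 0) : Dq q f x = Dq q g x := by
  simp only [Dq, hfg x hx, hfg (q * x) (mul_ne_zero hq0 hx)]

lemma Dq_add (f g : ℝ → ℝ) (x : ℝ) : Dq q (f + g) x = Dq q f x + Dq q g x := by
  simp only [Dq, Pi.add_apply]
  ring

lemma Dq_mul (f g : ℝ → ℝ) (x : ℝ) :
    Dq q (f * g) x = Dq q f x * g x + f (q * x) * Dq q g x := by
  simp only [Dq, Pi.mul_apply]
  ring

theorem iterate_Dq_add_two (hq0 : q ≠ 0) {l0 s0 y : ℝ → ℝ}
    (hy : ∀ x, x ≠ 0 → (Dq q)^[2] y x = l0 x * Dq q y x + s0 x * y x) (k : ℕ) :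
    ∀ x, x ≠ 0 → (Dq q)^[k + 2] y x
      = (qdaim q l0 s0 k).1 x * Dq q y x + (qdaim q l0 s0 k).2 x * y x := by
  induction k with
  | zero => simpa [qdaim] using hy
  | succ k ih =>
    intro x hx
    rw [Function.iterate_succ_apply',
      Dq_congr (g := (qdaim q l0 s0 k).1 * Dq q y + (qdaim q l0 s0 k).2 * y) hq0 ih hx,
      Dq_add, Dq_mul, Dq_mul, show Dq q (Dq q y) x = (Dq q)^[2] y x from rfl, hy x hx]
    simp only [qdaim]
    ring

end QDifference

section PolynomialQDifference

variable {q : ℝ}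

-- `divX` drops the constant term, which is zero for `Q(X) - Q(qX)`, so this is exact division by `X`.
noncomputable def qDiff (q : ℝ) (Q : ℝ[X]) : ℝ[X] :=
  C (1 - q)⁻¹ * divX (Q - Q.comp (C q * X))

lemma eval_qDiff (hq1 : q ≠ 1) (Q : ℝ[X]) {x : ℝ} (hx : x ≠ 0) :
    (qDiff q Q).eval x = Dq q (fun t => Q.eval t) x := by
  have key := congrArg (eval x) (divX_mul_X_add (Q - Q.comp (C q * X)))
  simp only [coeff_zero_eq_eval_zero, eval_sub, eval_comp, eval_mul, eval_C, eval_X, mul_zero,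
    sub_self, map_zero, add_zero] at key
  have h1q : (1 : ℝ) - q ≠ 0 := sub_ne_zero.2 hq1.symm
  rw [qDiff, Dq, eval_mul, eval_C, ← key]
  field_simp

lemma qDiff_C (c : ℝ) : qDiff q (C c) = 0 := by
  simp [qDiff]

lemma natDegree_qDiff_le (Q : ℝ[X]) : (qDiff q Q).natDegree ≤ Q.natDegree - 1 := by
  have hcomp : (Q.comp (C q * X)).natDegree ≤ Q.natDegree :=
    natDegree_comp_le.trans <| by
      simpa using Nat.mul_le_mul_left Q.natDegree ((natDegree_C_mul_le q X).trans natDegree_X_le)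
  have hsub := (natDegree_sub_le Q (Q.comp (C q * X))).trans (max_le le_rfl hcomp)
  calc (qDiff q Q).natDegree ≤ (divX (Q - Q.comp (C q * X))).natDegree := natDegree_C_mul_le _ _
    _ ≤ Q.natDegree - 1 := by rw [natDegree_divX_eq_natDegree_tsub_one]; omega

lemma natDegree_iterate_qDiff_le (Q : ℝ[X]) (k : ℕ) :
    ((qDiff q)^[k] Q).natDegree ≤ Q.natDegree - k := by
  induction k with
  | zero => simp
  | succ k ih =>
    rw [Function.iterate_succ_apply']
    have := natDegree_qDiff_le (q := q) ((qDiff q)^[k] Q)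
    omega

lemma iterate_qDiff_eq_zero {Q : ℝ[X]} {k : ℕ} (hk : Q.natDegree < k) : (qDiff q)^[k] Q = 0 := by
  obtain ⟨j, rfl⟩ := Nat.exists_eq_add_of_lt hk
  have hconst : ((qDiff q)^[Q.natDegree + j] Q).natDegree = 0 := by
    have := natDegree_iterate_qDiff_le (q := q) Q (Q.natDegree + j)
    omega
  rw [Function.iterate_succ_apply', eq_C_of_natDegree_eq_zero hconst, qDiff_C]

lemma iterate_Dq_eval (hq0 : q ≠ 0) (hq1 : q ≠ 1) (Q : ℝ[X]) (k : ℕ) :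
    ∀ x, x ≠ 0 → (Dq q)^[k] (fun t => Q.eval t) x = ((qDiff q)^[k] Q).eval x := by
  induction k with
  | zero => simp
  | succ k ih =>
    intro x hx
    rw [Function.iterate_succ_apply', Function.iterate_succ_apply', Dq_congr hq0 ih hx,
      eval_qDiff hq1 _ hx]

lemma iterate_Dq_eval_eq_zero (hq0 : q ≠ 0) (hq1 : q ≠ 1) {Q : ℝ[X]} {k : ℕ}
    (hk : Q.natDegree < k) {x : ℝ} (hx : x ≠ 0) : (Dq q)^[k] (fun t => Q.eval t) x = 0 := by
  rw [iterate_Dq_eval hq0 hq1 Q k x hx, iterate_qDiff_eq_zero hk, eval_zero]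

end PolynomialQDifference

theorem stmt_16_general (q : ℝ) (hq0 : 0 < q) (hq1 : q < 1) (l0 s0 : ℝ → ℝ)
    (n : ℕ)
    (y : ℝ → ℝ) (P : Polynomial ℝ) (hyP : ∀ x : ℝ, y x = P.eval x)
    (hdeg : P.natDegree = n)
    (hy : ∀ x : ℝ, x ≠ 0 → (Dq q)^[2] y x = l0 x * Dq q y x + s0 x * y x) :
    ∀ x : ℝ, x ≠ 0 →
      ((qdaim q l0 s0 n).2 x * (qdaim q l0 s0 (n - 1)).1 x
          - (qdaim q l0 s0 (n - 1)).2 x * (qdaim q l0 s0 n).1 x) * Dq q y x = 0 := by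
  intro x hx
  obtain rfl : y = fun t => P.eval t := funext hyP
  have hvanish (k : ℕ) (hk : n < k) : (Dq q)^[k] (fun t => P.eval t) x = 0 :=
    iterate_Dq_eval_eq_zero hq0.ne' hq1.ne (hdeg ▸ hk) hx
  have hprev := iterate_Dq_add_two hq0.ne' hy (n - 1) x hx
  have hcurr := iterate_Dq_add_two hq0.ne' hy n x hx
  rw [hvanish _ (by omega)] at hprev hcurr
  linear_combination (-(qdaim q l0 s0 n).2 x) * hprev + (qdaim q l0 s0 (n - 1)).2 x * hcurr

theorem stmt_16 (q : ℝ) (hq0 : 0 < q) (hq1 : q < 1) (l0 s0 : ℝ → ℝ)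
    (n : ℕ) (hn : 1 ≤ n)
    (y : ℝ → ℝ) (P : Polynomial ℝ) (hyP : ∀ x : ℝ, y x = P.eval x)
    (hdeg : P.natDegree = n)
    (hy : ∀ x : ℝ, x ≠ 0 → (Dq q)^[2] y x = l0 x * Dq q y x + s0 x * y x) :
    ∀ x : ℝ, x ≠ 0 →
      ((qdaim q l0 s0 n).2 x * (qdaim q l0 s0 (n - 1)).1 x
          - (qdaim q l0 s0 (n - 1)).2 x * (qdaim q l0 s0 n).1 x) * Dq q y x = 0 :=
  stmt_16_general q hq0 hq1 l0 s0 n y P hyP hdeg hy
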